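/- Division with remainder from the left: for every differential operator N on the superline and every nondegenerate differential operator M of order m on the superline, there exist unique differential operators Q and R on the superline such that N = M∘Q + R and R has order ≤ m−1. -/

import Mathlib

noncomputable section
set_option synthInstance.maxHeartbeats 1000000
set_option maxHeartbeats 1000000

open TrivSqZeroExt

/-- Smooth real functions on the line, as a subalgebra of `ℝ → ℝ`. -/
def SmoothR : Subalgebra ℝ (ℝ → ℝ) where
  carrier := {f | ContDiff ℝ (⊤ : ℕ∞) f}
  mul_mem' := fun {a b} (ha : ContDiff ℝ (⊤ : ℕ∞) a) (hb : ContDiff ℝ (⊤ : ℕ∞) b) => ha.mul hb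
  add_mem' := fun {a b} (ha : ContDiff ℝ (⊤ : ℕ∞) a) (hb : ContDiff ℝ (⊤ : ℕ∞) b) => ha.add hb
  algebraMap_mem' := fun c => show ContDiff ℝ (⊤ : ℕ∞) (fun _ => c) from contDiff_const

lemma SmoothR.contDiff (f : SmoothR) : ContDiff ℝ (⊤ : ℕ∞) (f : ℝ → ℝ) := f.2

lemma SmoothR.differentiable (f : SmoothR) : Differentiable ℝ (f : ℝ → ℝ) :=
  (SmoothR.contDiff f).differentiable (by first | simp | exact_mod_cast (top_ne_zero : (⊤ : ℕ∞) ≠ 0))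

/-- The ring `A` of superline functions: `f = f₀ + ξ f₁`. -/
abbrev SuperA : Type := TrivSqZeroExt SmoothR SmoothR


/-- Differentiation `f ↦ f′` on smooth functions, as an ℝ-linear map. -/
def derivSm : SmoothR →ₗ[ℝ] SmoothR where
  toFun f := ⟨deriv (f : ℝ → ℝ), (contDiff_infty_iff_deriv.mp (SmoothR.contDiff f)).2⟩
  map_add' f g := by
    ext x
    exact deriv_add ((SmoothR.differentiable f) x) ((SmoothR.differentiable g) x)
  map_smul' c f := by
    ext x
    have h := deriv_const_smul (f := (f : ℝ → ℝ)) c ((SmoothR.differentiable f) x)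
    have : deriv (c • (f : ℝ → ℝ)) x = c • deriv (f : ℝ → ℝ) x := by
      simpa [Pi.smul_def] using h
    simp_all

/-- The odd vector field `D = ∂_ξ + ξ ∂_x`, i.e. `D(f₀ + ξ f₁) = f₁ + ξ f₀′`. -/
def D : Module.End ℝ SuperA where
  toFun f := inl (snd f) + inr (derivSm (fst f))
  map_add' f g := by apply TrivSqZeroExt.ext <;> simp
  map_smul' c f := by apply TrivSqZeroExt.ext <;> simp

/-- Multiplication by `a ∈ A` as an ℝ-linear endomorphism of `A`. -/
def mulOp (a : SuperA) : Module.End ℝ SuperA := LinearMap.mulLeft ℝ a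

/-- `L` is a differential operator on the superline of order `≤ m`:
`L = a_m D^m + ⋯ + a₀`. -/
def IsOpOfOrderLE (L : Module.End ℝ SuperA) (m : ℕ) : Prop :=
  ∃ a : Fin (m + 1) → SuperA, L = ∑ i : Fin (m + 1), mulOp (a i) * D ^ (i : ℕ)

/-- `L` is a differential operator on the superline (of some order). -/
def IsDiffOp (L : Module.End ℝ SuperA) : Prop := ∃ m, IsOpOfOrderLE L m

/-- `L` is a differential operator of order `< m` (i.e. of order `≤ m − 1`;
for `m = 0` this means `L = 0`). -/
def IsOpOfOrderLT (L : Module.End ℝ SuperA) (m : ℕ) : Prop :=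
  ∃ a : Fin m → SuperA, L = ∑ i : Fin m, mulOp (a i) * D ^ (i : ℕ)

/-- `L` is a nondegenerate operator of order `m`: the top coefficient `a_m`
is invertible in `A`. -/
def IsNondegOfOrder (L : Module.End ℝ SuperA) (m : ℕ) : Prop :=
  ∃ a : Fin (m + 1) → SuperA, IsUnit (a (Fin.last m)) ∧
    L = ∑ i : Fin (m + 1), mulOp (a i) * D ^ (i : ℕ)

/-- `L` is a monic operator of order `m`: the top coefficient `a_m` equals `1`. -/
def IsMonicOfOrder (L : Module.End ℝ SuperA) (m : ℕ) : Prop :=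
  ∃ a : Fin (m + 1) → SuperA, a (Fin.last m) = 1 ∧
    L = ∑ i : Fin (m + 1), mulOp (a i) * D ^ (i : ℕ)

/-- `f = f₀ + ξ f₁` is even iff `f₁ = 0`. -/
def SuperA.IsEven (f : SuperA) : Prop := snd f = 0

/-- `f = f₀ + ξ f₁` is odd iff `f₀ = 0`. -/
def SuperA.IsOdd (f : SuperA) : Prop := fst f = 0

/-- `f = f₀ + ξ f₁` is constant iff `f₁ = 0` and `f₀` is a constant function. -/
def SuperA.IsConstant (f : SuperA) : Prop :=
  snd f = 0 ∧ ∃ c : ℝ, ∀ x : ℝ, ((fst f : SmoothR) : ℝ → ℝ) x = c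

/-- The first-order operator `M_φ = D − (Dφ)φ⁻¹ = φ ∘ D ∘ φ⁻¹`. -/
def Mphi (φ : SuperA) : Module.End ℝ SuperA := D - mulOp (D φ * Ring.inverse φ)


/-! ### Auxiliary development for the division theorem -/

open Finset in
lemma test : True := trivial

lemma derivSm_mul (f g : SmoothR) : derivSm (f * g) = derivSm f * g + f * derivSm g := by
  apply Subtype.ext
  funext x
  have hf := SmoothR.differentiable f x
  have hg := SmoothR.differentiable g x
  simpa [derivSm] using deriv_mul hf hg

lemma derivSm_one : derivSm (1 : SmoothR) = 0 := by
  apply Subtype.ext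
  funext x
  show deriv ((1:SmoothR) : ℝ → ℝ) x = 0
  have : ((1 : SmoothR) : ℝ → ℝ) = fun _ => (1:ℝ) := rfl
  rw [this, deriv_const]

lemma D_one : D (1 : SuperA) = 0 := by
  simp [D, derivSm_one]

/-- grade involution -/
def sgm (f : SuperA) : SuperA := inl (fst f) + inr (-snd f)

lemma sgm_fst (f : SuperA) : fst (sgm f) = fst f := by simp [sgm]
lemma sgm_snd (f : SuperA) : snd (sgm f) = -snd f := by simp [sgm]

lemma sgm_sgm (f : SuperA) : sgm (sgm f) = f := by
  apply TrivSqZeroExt.ext <;> simp [sgm_fst, sgm_snd]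

lemma sgm_mul (f g : SuperA) : sgm (f * g) = sgm f * sgm g := by
  apply TrivSqZeroExt.ext <;>
    simp [sgm_fst, sgm_snd, smul_eq_mul] <;> ring

lemma comm1 (f : SuperA) : D * mulOp f = mulOp (D f) + mulOp (sgm f) * D := by
  apply LinearMap.ext; intro g
  apply TrivSqZeroExt.ext <;>
    simp [mulOp, D, Module.End.mul_apply, sgm_fst, sgm_snd, derivSm_mul, smul_eq_mul] <;> ring

lemma exists_antideriv (h : SmoothR) : ∃ g : SmoothR, derivSm g = h := by
  have hc : Continuous (h : ℝ → ℝ) := (SmoothR.contDiff h).continuous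
  set G : ℝ → ℝ := fun x => ∫ t in (0:ℝ)..x, (h : ℝ → ℝ) t with hG
  have hd : ∀ x, HasDerivAt G ((h : ℝ → ℝ) x) x := by
    intro x
    exact intervalIntegral.integral_hasDerivAt_right
      (hc.intervalIntegrable _ _) (hc.stronglyMeasurableAtFilter _ _) hc.continuousAt
  have hdiff : Differentiable ℝ G := fun x => (hd x).differentiableAt
  have hderiv : deriv G = (h : ℝ → ℝ) := funext fun x => (hd x).deriv
  have hsm : ContDiff ℝ (⊤ : ℕ∞) G :=
    contDiff_infty_iff_deriv.mpr ⟨hdiff, by rw [hderiv]; exact SmoothR.contDiff h⟩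
  refine ⟨⟨G, hsm⟩, Subtype.ext ?_⟩
  exact hderiv

lemma D_surjective : Function.Surjective (D : Module.End ℝ SuperA) := by
  intro t
  obtain ⟨g, hg⟩ := exists_antideriv (snd t)
  refine ⟨inl g + inr (fst t), ?_⟩
  apply TrivSqZeroExt.ext <;> simp [D, hg]

lemma mulOp_add (a b : SuperA) : mulOp (a + b) = mulOp a + mulOp b := by
  apply LinearMap.ext; intro f; simp [mulOp, add_mul]

lemma mulOp_sub (a b : SuperA) : mulOp (a - b) = mulOp a - mulOp b := by
  apply LinearMap.ext; intro f; simp [mulOp, sub_mul]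

lemma mulOp_zero : mulOp (0 : SuperA) = 0 := by
  apply LinearMap.ext; intro f; simp [mulOp]

lemma mulOp_mul (a b : SuperA) : mulOp (a * b) = mulOp a * mulOp b := by
  apply LinearMap.ext; intro f; simp [mulOp, mul_assoc]

lemma Dpow_one_eq_zero {i : ℕ} (hi : 1 ≤ i) : (D ^ i) (1 : SuperA) = 0 := by
  obtain ⟨j, rfl⟩ := Nat.exists_eq_add_of_le' hi
  rw [pow_succ, Module.End.mul_apply, D_one, map_zero]

open Finset

lemma sgm_zero : sgm (0 : SuperA) = 0 := by
  apply TrivSqZeroExt.ext <;> simp [sgm_fst, sgm_snd]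

lemma sum_ops_pad (c : ℕ → SuperA) {n n' : ℕ} (h : n ≤ n') (hz : ∀ j, n ≤ j → c j = 0) :
    ∑ j ∈ range n, mulOp (c j) * D ^ j = ∑ j ∈ range n', mulOp (c j) * D ^ j := by
  apply Finset.sum_subset (Finset.range_subset_range.2 h)
  intro x _ hx
  rw [hz x (by simpa using hx), mulOp_zero, zero_mul]

lemma pad_if (c : ℕ → SuperA) {n n' : ℕ} (h : n ≤ n') :
    ∑ j ∈ range n, mulOp (c j) * D ^ j
      = ∑ j ∈ range n', mulOp (if j < n then c j else 0) * D ^ j := by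
  rw [show (∑ j ∈ range n, mulOp (c j) * D ^ j)
      = ∑ j ∈ range n, mulOp (if j < n then c j else 0) * D ^ j from
    Finset.sum_congr rfl fun j hj => by rw [if_pos (mem_range.1 hj)]]
  exact sum_ops_pad _ h fun j hj => if_neg (by omega)

lemma Dpow_mulOp (i : ℕ) (f : SuperA) :
    ∃ c : ℕ → SuperA, (∀ j, i < j → c j = 0) ∧ c i = sgm^[i] f ∧
      (D:Module.End ℝ SuperA) ^ i * mulOp f = ∑ j ∈ range (i + 1), mulOp (c j) * D ^ j := by
  induction i with
  | zero =>
    refine ⟨fun j => if j = 0 then f else 0, fun j hj => if_neg (by omega), by simp, ?_⟩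
    simp
  | succ i ih =>
    obtain ⟨c, hz, htop, hsum⟩ := ih
    set u : ℕ → SuperA := fun j => if j ≤ i then D (c j) else 0 with hu
    set v : ℕ → SuperA := fun j => if 1 ≤ j then sgm (c (j - 1)) else 0 with hv
    refine ⟨fun j => u j + v j, ?_, ?_, ?_⟩
    · intro j hj
      show u j + v j = 0
      have h1 : u j = 0 := if_neg (by omega)
      have h2 : v j = 0 := by
        rcases Nat.eq_zero_or_pos j with h | h
        · omega
        · have : c (j - 1) = 0 := hz _ (by omega)
          simp [hv, this, sgm_zero]
      rw [h1, h2, add_zero]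
    · show u (i+1) + v (i+1) = sgm^[i+1] f
      have h1 : u (i+1) = 0 := if_neg (by omega)
      have h2 : v (i+1) = sgm (c i) := by simp [hv]
      rw [h1, h2, zero_add, htop, Function.iterate_succ_apply']
    · have key : (D:Module.End ℝ SuperA) ^ (i+1) * mulOp f
          = ∑ j ∈ range (i+1), (mulOp (D (c j)) * D ^ j + mulOp (sgm (c j)) * D ^ (j+1)) := by
        rw [pow_succ', mul_assoc, hsum, Finset.mul_sum]
        apply Finset.sum_congr rfl
        intro j _
        rw [← mul_assoc, comm1 (c j), add_mul, mul_assoc, ← pow_succ']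
      rw [key, Finset.sum_add_distrib]
      have e1 : ∑ j ∈ range (i+1), mulOp (D (c j)) * D ^ j
          = ∑ j ∈ range (i+2), mulOp (u j) * D ^ j := by
        have h1 : ∀ j ∈ range (i+1), mulOp (D (c j)) * D ^ j = mulOp (u j) * D ^ j := by
          intro j hj
          have hj' := mem_range.1 hj
          have : u j = D (c j) := if_pos (by omega)
          rw [this]
        rw [Finset.sum_congr rfl h1]
        exact sum_ops_pad u (by omega) fun j hj => if_neg (by omega)
      have e2 : ∑ j ∈ range (i+1), mulOp (sgm (c j)) * D ^ (j+1)
          = ∑ j ∈ range (i+2), mulOp (v j) * D ^ j := by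
        rw [Finset.sum_range_succ' (fun j => mulOp (v j) * D ^ j) (i+1)]
        have : v 0 = 0 := rfl
        rw [this, mulOp_zero, zero_mul, add_zero]
        apply Finset.sum_congr rfl
        intro j _
        have : v (j+1) = sgm (c j) := by simp [hv]
        rw [this]
      rw [e1, e2, ← Finset.sum_add_distrib]
      apply Finset.sum_congr rfl
      intro j _
      rw [mulOp_add, add_mul]

lemma sgm_iter_zero (m : ℕ) : sgm^[m] (0 : SuperA) = 0 := by
  induction m with
  | zero => rfl
  | succ m ih => rw [Function.iterate_succ_apply', ih, sgm_zero]

lemma sgm_iter_invol (m : ℕ) (x : SuperA) : sgm^[m] (sgm^[m] x) = x := by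
  induction m generalizing x with
  | zero => rfl
  | succ m ih =>
    rw [Function.iterate_succ_apply (sgm) m (sgm^[m+1] x),
      Function.iterate_succ_apply' (sgm) m x, sgm_sgm, ih]

lemma sgm_iter_eq_zero {m : ℕ} {x : SuperA} (h : sgm^[m] x = 0) : x = 0 := by
  have := congrArg (sgm^[m]) h
  rwa [sgm_iter_invol, sgm_iter_zero] at this

lemma sgm_iter_mul (m : ℕ) (x y : SuperA) :
    sgm^[m] (x * y) = sgm^[m] x * sgm^[m] y := by
  induction m generalizing x y with
  | zero => rfl
  | succ m ih =>
    simp only [Function.iterate_succ_apply', ih, sgm_mul]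

lemma mulOp_sum {α : Type*} (s : Finset α) (f : α → SuperA) :
    mulOp (∑ x ∈ s, f x) = ∑ x ∈ s, mulOp (f x) := by
  apply LinearMap.ext; intro g
  simp [mulOp, LinearMap.sum_apply, Finset.sum_mul]

lemma fin_sum_to_range (n : ℕ) (a : Fin n → SuperA) :
    ∑ i : Fin n, mulOp (a i) * D ^ (i : ℕ)
      = ∑ i ∈ Finset.range n,
          mulOp (if h : i < n then a ⟨i, h⟩ else 0) * D ^ i := by
  rw [← Fin.sum_univ_eq_sum_range (fun i => mulOp (if h : i < n then a ⟨i, h⟩ else 0) * D ^ i) n]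
  apply Finset.sum_congr rfl
  intro i _
  rw [dif_pos i.isLt]

lemma range_sum_to_fin (n : ℕ) (b : ℕ → SuperA) :
    ∑ i ∈ Finset.range n, mulOp (b i) * D ^ i
      = ∑ i : Fin n, mulOp (b (i : ℕ)) * D ^ (i : ℕ) :=
  (Fin.sum_univ_eq_sum_range (fun i => mulOp (b i) * D ^ i) n).symm

lemma ordLE_iff (L : Module.End ℝ SuperA) (m : ℕ) :
    IsOpOfOrderLE L m ↔ ∃ b : ℕ → SuperA, L = ∑ i ∈ Finset.range (m+1), mulOp (b i) * D ^ i := by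
  constructor
  · rintro ⟨a, rfl⟩
    exact ⟨_, fin_sum_to_range (m+1) a⟩
  · rintro ⟨b, rfl⟩
    exact ⟨fun i => b i, range_sum_to_fin (m+1) b⟩

lemma ordLT_iff (L : Module.End ℝ SuperA) (m : ℕ) :
    IsOpOfOrderLT L m ↔ ∃ b : ℕ → SuperA, L = ∑ i ∈ Finset.range m, mulOp (b i) * D ^ i := by
  constructor
  · rintro ⟨a, rfl⟩
    exact ⟨_, fin_sum_to_range m a⟩
  · rintro ⟨b, rfl⟩
    exact ⟨fun i => b i, range_sum_to_fin m b⟩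

lemma isDiffOp_iff (L : Module.End ℝ SuperA) :
    IsDiffOp L ↔ ∃ (n : ℕ) (b : ℕ → SuperA), L = ∑ i ∈ Finset.range n, mulOp (b i) * D ^ i := by
  constructor
  · rintro ⟨m, hm⟩
    obtain ⟨b, rfl⟩ := (ordLE_iff _ m).1 hm
    exact ⟨m+1, b, rfl⟩
  · rintro ⟨n, b, rfl⟩
    refine ⟨n, (ordLE_iff _ n).2 ⟨fun i => if i < n then b i else 0, ?_⟩⟩
    exact pad_if b (Nat.le_succ n)

lemma indep : ∀ (n : ℕ) (a : ℕ → SuperA),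
    (∑ i ∈ Finset.range n, mulOp (a i) * D ^ i) = 0 → ∀ i < n, a i = 0 := by
  intro n
  induction n with
  | zero => intro a _ i hi; omega
  | succ n ih =>
    intro a hsum
    have happ : ∀ f : SuperA, ∑ i ∈ Finset.range (n+1), a i * ((D ^ i) f) = 0 := by
      intro f
      have := congrArg (fun (L : Module.End ℝ SuperA) => L f) hsum
      simpa [LinearMap.sum_apply, Module.End.mul_apply, mulOp] using this
    have ha0 : a 0 = 0 := by
      have h1 := happ 1
      rw [Finset.sum_range_succ'] at h1
      have h2 : ∀ i ∈ Finset.range n, a (i+1) * ((D ^ (i+1)) (1:SuperA)) = 0 := by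
        intro i _
        rw [Dpow_one_eq_zero (by omega), mul_zero]
      rw [Finset.sum_congr rfl h2] at h1
      simpa using h1
    have hrest : ∀ g : SuperA, ∑ i ∈ Finset.range n, a (i+1) * ((D ^ i) g) = 0 := by
      intro g
      obtain ⟨f, rfl⟩ := D_surjective g
      have h1 := happ f
      rw [Finset.sum_range_succ', ha0, zero_mul, add_zero] at h1
      rw [← h1]
      apply Finset.sum_congr rfl
      intro i _
      rw [pow_succ, Module.End.mul_apply]
    have hend : (∑ i ∈ Finset.range n, mulOp (a (i+1)) * D ^ i) = 0 := by
      apply LinearMap.ext; intro g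
      simpa [LinearMap.sum_apply, Module.End.mul_apply, mulOp] using hrest g
    have := ih (fun i => a (i+1)) hend
    intro i hi
    cases i with
    | zero => exact ha0
    | succ i => exact this i (by omega)

open Finset

lemma sum_pad_zero {β : Type*} [AddCommMonoid β] (f : ℕ → β) {n n' : ℕ} (h : n ≤ n')
    (hz : ∀ j, n ≤ j → f j = 0) :
    ∑ j ∈ range n, f j = ∑ j ∈ range n', f j :=
  Finset.sum_subset (Finset.range_subset_range.2 h) fun x _ hx => hz x (by simpa using hx)

lemma mulRep (m k : ℕ) (a : ℕ → SuperA) (q : SuperA) :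
    ∃ c : ℕ → SuperA, c (m + k) = a m * sgm^[m] q ∧ (∀ t, m + k < t → c t = 0) ∧
      (∑ i ∈ range (m+1), mulOp (a i) * D ^ i) * (mulOp q * D ^ k)
        = ∑ t ∈ range (m + k + 1), mulOp (c t) * D ^ t := by
  have hcc := fun i => Dpow_mulOp i q
  choose cc hz htop hsum using hcc
  set c : ℕ → SuperA := fun t =>
    if k ≤ t ∧ t < m + k + 1 then ∑ i ∈ range (m+1), a i * cc i (t - k) else 0 with hc
  have hctop : c (m + k) = a m * sgm^[m] q := by
    have h1 : c (m + k) = ∑ i ∈ range (m+1), a i * cc i m := by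
      rw [hc]; simp only []
      rw [if_pos ⟨by omega, by omega⟩]
      simp only [Nat.add_sub_cancel]
    rw [h1, Finset.sum_eq_single_of_mem m (self_mem_range_succ m)]
    · rw [htop m]
    · intro i hi hne
      rw [hz i m (by have := mem_range.1 hi; omega), mul_zero]
  have hczero : ∀ t, m + k < t → c t = 0 := by
    intro t ht
    rw [hc]; simp only []
    rw [if_neg (by omega)]
  refine ⟨c, hctop, hczero, ?_⟩
  have step1 : (∑ i ∈ range (m+1), mulOp (a i) * D ^ i) * (mulOp q * D ^ k)
      = ∑ i ∈ range (m+1), ∑ j ∈ range (m+1), mulOp (a i * cc i j) * D ^ (j + k) := by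
    rw [Finset.sum_mul]
    apply Finset.sum_congr rfl
    intro i hi
    have h2 : mulOp (a i) * D ^ i * (mulOp q * D ^ k)
        = mulOp (a i) * (D ^ i * mulOp q) * D ^ k := by
      simp only [mul_assoc]
    rw [h2, hsum i, Finset.mul_sum, Finset.sum_mul]
    have h3 : ∀ j, mulOp (a i) * (mulOp (cc i j) * D ^ j) * D ^ k
        = mulOp (a i * cc i j) * D ^ (j + k) := by
      intro j
      rw [mulOp_mul, pow_add]
      simp only [mul_assoc]
    rw [Finset.sum_congr rfl fun j _ => h3 j]
    exact sum_pad_zero _ (by have := mem_range.1 hi; omega)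
      (fun j hj => by rw [hz i j (by omega), mul_zero, mulOp_zero, zero_mul])
  have step2 : ∑ i ∈ range (m+1), ∑ j ∈ range (m+1), mulOp (a i * cc i j) * D ^ (j + k)
      = ∑ j ∈ range (m+1), mulOp (c (k + j)) * D ^ (k + j) := by
    rw [Finset.sum_comm]
    apply Finset.sum_congr rfl
    intro j hj
    have hj' := mem_range.1 hj
    have h4 : c (k + j) = ∑ i ∈ range (m+1), a i * cc i j := by
      rw [hc]; simp only []
      rw [if_pos ⟨by omega, by omega⟩]
      simp only [Nat.add_sub_cancel_left]
    rw [h4, mulOp_sum, Finset.sum_mul]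
    apply Finset.sum_congr rfl
    intro i _
    rw [add_comm k j]
  have h5 : ∑ t ∈ Finset.Ico 0 k, mulOp (c t) * D ^ t = 0 := by
    apply Finset.sum_eq_zero
    intro t ht
    have ht' : t < k := (Finset.mem_Ico.1 ht).2
    have : c t = 0 := by rw [hc]; simp only []; rw [if_neg (by omega)]
    rw [this, mulOp_zero, zero_mul]
  have hsplit : ∑ t ∈ range (m + k + 1), mulOp (c t) * D ^ t
      = ∑ j ∈ range (m+1), mulOp (c (k + j)) * D ^ (k + j) := by
    rw [Finset.range_eq_Ico,
      ← Finset.sum_Ico_consecutive _ (Nat.zero_le k) (by omega : k ≤ m+k+1),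
      h5, zero_add, Finset.sum_Ico_eq_sum_range]
    simp only [show m + k + 1 - k = m + 1 from by omega]
  rw [step1, step2, hsplit]

lemma keyMul (m k : ℕ) (a b : ℕ → SuperA) :
    ∃ c : ℕ → SuperA, c (m + k) = a m * sgm^[m] (b k) ∧
      (∑ i ∈ range (m+1), mulOp (a i) * D ^ i) * (∑ j ∈ range (k+1), mulOp (b j) * D ^ j)
        = ∑ t ∈ range (m + k + 1), mulOp (c t) * D ^ t := by
  have hcf := fun j => mulRep m j a (b j)
  choose cf htop hzero hsum using hcf
  refine ⟨fun t => ∑ j ∈ range (k+1), cf j t, ?_, ?_⟩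
  · show ∑ j ∈ range (k+1), cf j (m + k) = _
    rw [Finset.sum_eq_single_of_mem k (self_mem_range_succ k)]
    · exact htop k
    · intro j hj hne
      exact hzero j (m + k) (by have := mem_range.1 hj; omega)
  · rw [Finset.mul_sum]
    have h1 : ∀ j ∈ range (k+1),
        (∑ i ∈ range (m+1), mulOp (a i) * D ^ i) * (mulOp (b j) * D ^ j)
          = ∑ t ∈ range (m + k + 1), mulOp (cf j t) * D ^ t := by
      intro j hj
      have hj' := mem_range.1 hj
      rw [hsum j]
      exact sum_pad_zero _ (by omega)
        (fun t ht => by rw [hzero j t (by omega), mulOp_zero, zero_mul])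
    rw [Finset.sum_congr rfl h1, Finset.sum_comm]
    apply Finset.sum_congr rfl
    intro t _
    show _ = mulOp (∑ j ∈ range (k+1), cf j t) * D ^ t
    rw [mulOp_sum, Finset.sum_mul]

open Finset

lemma end_mul_add (X Y Z : Module.End ℝ SuperA) : X * (Y + Z) = X * Y + X * Z := by
  apply LinearMap.ext; intro f
  simp [Module.End.mul_apply, map_add]

lemma end_sub_eq_add_neg (X Y : Module.End ℝ SuperA) : X - Y = X + -Y := by
  apply LinearMap.ext; intro f
  simp [sub_eq_add_neg]

lemma end_neg_mul (X Y : Module.End ℝ SuperA) : -X * Y = -(X * Y) := by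
  apply LinearMap.ext; intro f
  simp [Module.End.mul_apply]

lemma end_sub_mul (X Y Z : Module.End ℝ SuperA) : (X - Y) * Z = X * Z - Y * Z := by
  apply LinearMap.ext; intro f
  simp [Module.End.mul_apply]

lemma end_sum_neg (s : Finset ℕ) (f : ℕ → Module.End ℝ SuperA) :
    -∑ i ∈ s, f i = ∑ i ∈ s, -f i := by
  apply LinearMap.ext; intro x
  simp [LinearMap.sum_apply, Finset.sum_neg_distrib]

lemma end_sum_sub (s : Finset ℕ) (f g : ℕ → Module.End ℝ SuperA) :
    ∑ i ∈ s, f i - ∑ i ∈ s, g i = ∑ i ∈ s, (f i - g i) := by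
  apply LinearMap.ext; intro x
  simp [LinearMap.sum_apply, Finset.sum_sub_distrib]

lemma mulOp_neg (a : SuperA) : mulOp (-a) = -mulOp a := by
  apply LinearMap.ext; intro f
  show -a * f = -(a * f)
  exact neg_mul a f

lemma isDiffOp_add {P Q : Module.End ℝ SuperA} (hP : IsDiffOp P) (hQ : IsDiffOp Q) :
    IsDiffOp (P + Q) := by
  obtain ⟨n1, b1, rfl⟩ := (isDiffOp_iff P).1 hP
  obtain ⟨n2, b2, rfl⟩ := (isDiffOp_iff Q).1 hQ
  apply (isDiffOp_iff _).2
  refine ⟨max n1 n2, fun i => (if i < n1 then b1 i else 0) + (if i < n2 then b2 i else 0), ?_⟩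
  rw [pad_if b1 (le_max_left n1 n2), pad_if b2 (le_max_right n1 n2),
    ← Finset.sum_add_distrib]
  apply Finset.sum_congr rfl
  intro i _
  rw [mulOp_add, add_mul]

lemma isDiffOp_neg {P : Module.End ℝ SuperA} (hP : IsDiffOp P) : IsDiffOp (-P) := by
  obtain ⟨n1, b1, rfl⟩ := (isDiffOp_iff P).1 hP
  apply (isDiffOp_iff _).2
  refine ⟨n1, fun i => -(b1 i), ?_⟩
  show -∑ i ∈ range n1, mulOp (b1 i) * D ^ i = ∑ i ∈ range n1, mulOp (-(b1 i)) * D ^ i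
  have h : ∀ i ∈ range n1, mulOp (-(b1 i)) * D ^ i = -(mulOp (b1 i) * D ^ i) :=
    fun i _ => by rw [mulOp_neg, end_neg_mul]
  rw [Finset.sum_congr rfl h]
  exact end_sum_neg _ _

lemma isDiffOp_sub {P Q : Module.End ℝ SuperA} (hP : IsDiffOp P) (hQ : IsDiffOp Q) :
    IsDiffOp (P - Q) := by
  rw [end_sub_eq_add_neg]
  exact isDiffOp_add hP (isDiffOp_neg hQ)

lemma isDiffOp_monomial (q : SuperA) (k : ℕ) : IsDiffOp (mulOp q * D ^ k) := by
  apply (isDiffOp_iff _).2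
  refine ⟨k + 1, fun i => if i = k then q else 0, ?_⟩
  rw [Finset.sum_eq_single_of_mem k (self_mem_range_succ k)]
  · show mulOp q * D ^ k = mulOp (if k = k then q else 0) * D ^ k
    rw [if_pos rfl]
  · intro i _ hne
    show mulOp (if i = k then q else 0) * D ^ i = 0
    rw [if_neg hne, mulOp_zero, zero_mul]

lemma exist_div (M : Module.End ℝ SuperA) (m : ℕ) (a : ℕ → SuperA) (ha : IsUnit (a m))
    (hM : M = ∑ i ∈ range (m+1), mulOp (a i) * D ^ i) :
    ∀ (n : ℕ) (N : Module.End ℝ SuperA) (b : ℕ → SuperA),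
      N = ∑ i ∈ range n, mulOp (b i) * D ^ i →
      ∃ (Q R : Module.End ℝ SuperA), IsDiffOp Q ∧
        (∃ r : ℕ → SuperA, R = ∑ i ∈ range m, mulOp (r i) * D ^ i) ∧ N = M * Q + R := by
  intro n
  induction n with
  | zero =>
    intro N b hb
    refine ⟨0, 0, (isDiffOp_iff _).2 ⟨0, b, by simp⟩, ⟨fun _ => 0, ?_⟩, ?_⟩
    · rw [eq_comm]
      apply Finset.sum_eq_zero
      intro i _
      rw [mulOp_zero, zero_mul]
    · simpa using hb
  | succ n ih =>
    intro N b hb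
    by_cases hcase : n + 1 ≤ m
    · refine ⟨0, N, (isDiffOp_iff _).2 ⟨0, b, by simp⟩, ⟨fun i => if i < n+1 then b i else 0, ?_⟩, by simp⟩
      rw [hb]
      exact pad_if b hcase
    · have hmn : m ≤ n := by omega
      set k := n - m with hk
      have hmk : m + k = n := by omega
      set q : SuperA := sgm^[m] ((↑ha.unit⁻¹ : SuperA) * b n) with hq
      obtain ⟨c, hctop, hczero, hcsum⟩ := mulRep m k a q
      have hcn : c n = b n := by
        rw [← hmk, hctop, hq, sgm_iter_invol, ← mul_assoc, IsUnit.mul_val_inv ha, one_mul, hmk]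
      have hdiff : N - M * (mulOp q * D ^ k) = ∑ i ∈ range n, mulOp (b i - c i) * D ^ i := by
        have hlast : mulOp (b n - c n) * D ^ n = 0 := by
          rw [hcn, sub_self, mulOp_zero, zero_mul]
        calc N - M * (mulOp q * D ^ k)
            = ∑ i ∈ range (n+1), mulOp (b i) * D ^ i
              - ∑ i ∈ range (n+1), mulOp (c i) * D ^ i := by
              rw [hb, hM, hcsum, hmk]
          _ = ∑ i ∈ range (n+1), (mulOp (b i) * D ^ i - mulOp (c i) * D ^ i) :=
              end_sum_sub _ _ _
          _ = ∑ i ∈ range (n+1), mulOp (b i - c i) * D ^ i :=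
              Finset.sum_congr rfl fun i _ => by rw [mulOp_sub]; exact (end_sub_mul _ _ _).symm
          _ = ∑ i ∈ range n, mulOp (b i - c i) * D ^ i := by
              rw [Finset.sum_range_succ, hlast, add_zero]
      obtain ⟨Q', R, hQ'd, hRrep, hN'⟩ := ih (N - M * (mulOp q * D ^ k)) (fun i => b i - c i) hdiff
      refine ⟨Q' + mulOp q * D ^ k, R, isDiffOp_add hQ'd (isDiffOp_monomial q k), hRrep, ?_⟩
      have h2 : N = M * Q' + R + M * (mulOp q * D ^ k) := by
        rw [← hN']; apply LinearMap.ext; intro f; simp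
      rw [h2, end_mul_add M Q' (mulOp q * D ^ k)]
      exact add_right_comm _ _ _

open Finset

lemma end_mul_sub (X Y Z : Module.End ℝ SuperA) : X * (Y - Z) = X * Y - X * Z := by
  apply LinearMap.ext; intro f
  simp [Module.End.mul_apply, map_sub]

lemma cancel (m : ℕ) (a : ℕ → SuperA) (ha : IsUnit (a m)) :
    ∀ (k : ℕ) (p : ℕ → SuperA),
      (∃ r : ℕ → SuperA,
        (∑ i ∈ range (m+1), mulOp (a i) * D ^ i) * (∑ i ∈ range k, mulOp (p i) * D ^ i)
          = ∑ i ∈ range m, mulOp (r i) * D ^ i) →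
      ∀ i < k, p i = 0 := by
  intro k
  induction k with
  | zero => intro p _ i hi; omega
  | succ k ih =>
    rintro p ⟨r, hr⟩
    obtain ⟨c, hctop, hcsum⟩ := keyMul m k a p
    have hpad : ∑ i ∈ range m, mulOp (r i) * D ^ i
        = ∑ i ∈ range (m+k+1), mulOp (if i < m then r i else 0) * D ^ i :=
      pad_if r (by omega)
    have e1 : ∀ i ∈ range (m+k+1),
        mulOp (c i - (if i < m then r i else 0)) * D ^ i
          = mulOp (c i) * D ^ i - mulOp (if i < m then r i else 0) * D ^ i := fun i _ => by
      rw [mulOp_sub]; exact end_sub_mul _ _ _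
    have hzero : ∑ i ∈ range (m+k+1), mulOp (c i - (if i < m then r i else 0)) * D ^ i = 0 :=
      calc ∑ i ∈ range (m+k+1), mulOp (c i - (if i < m then r i else 0)) * D ^ i
          = ∑ i ∈ range (m+k+1),
              (mulOp (c i) * D ^ i - mulOp (if i < m then r i else 0) * D ^ i) :=
            Finset.sum_congr rfl e1
        _ = ∑ i ∈ range (m+k+1), mulOp (c i) * D ^ i
            - ∑ i ∈ range (m+k+1), mulOp (if i < m then r i else 0) * D ^ i :=
            (end_sum_sub _ _ _).symm
        _ = 0 := by
            rw [← hcsum, ← hpad, ← hr]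
            exact sub_self ((∑ i ∈ range (m+1), mulOp (a i) * D ^ i)
              * ∑ j ∈ range (k+1), mulOp (p j) * D ^ j)
    have hall := indep (m+k+1) _ hzero
    have htopz : c (m+k) - (if m+k < m then r (m+k) else 0) = 0 := hall (m+k) (by omega)
    rw [if_neg (by omega), sub_zero] at htopz
    have h3 : a m * sgm^[m] (p k) = 0 := by rw [← hctop]; exact htopz
    have hpk : p k = 0 := by
      apply sgm_iter_eq_zero (m := m)
      calc sgm^[m] (p k)
          = (↑ha.unit⁻¹ : SuperA) * (a m * sgm^[m] (p k)) := by
            rw [← mul_assoc, IsUnit.val_inv_mul ha, one_mul]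
        _ = (↑ha.unit⁻¹ : SuperA) * 0 := by rw [h3]
        _ = 0 := mul_zero _
    rw [Finset.sum_range_succ (fun i => mulOp (p i) * D ^ i) k] at hr
    simp only [hpk, mulOp_zero, zero_mul, add_zero] at hr
    have hless := ih p ⟨r, hr⟩
    intro i hi
    rcases Nat.lt_succ_iff_lt_or_eq.1 hi with h | h
    · exact hless i h
    · rw [h]; exact hpk

/-- Division with remainder from the left: for every differential
operator `N` on the superline and every nondegenerate differential operator `M`
of order `m`, there exist unique differential operators `Q` and `R` with
`N = M∘Q + R` and `ord R ≤ m − 1`. -/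
theorem left_division_with_remainder
    (N M : Module.End ℝ SuperA) (m : ℕ)
    (hN : IsDiffOp N) (hM : IsNondegOfOrder M m) :
    ∃! QR : Module.End ℝ SuperA × Module.End ℝ SuperA,
      IsDiffOp QR.1 ∧ IsOpOfOrderLT QR.2 m ∧ N = M * QR.1 + QR.2 := by
  obtain ⟨n, b, hb⟩ := (isDiffOp_iff N).1 hN
  obtain ⟨aF, haU, hMsum⟩ := hM
  have hMa : M = ∑ i ∈ range (m+1),
      mulOp (if h : i < m+1 then aF ⟨i, h⟩ else 0) * D ^ i :=
    hMsum.trans (fin_sum_to_range (m+1) aF)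
  have haUnit : IsUnit (if h : m < m+1 then aF ⟨m, h⟩ else 0) := by
    rw [dif_pos (Nat.lt_succ_self m)]
    have heq : (⟨m, Nat.lt_succ_self m⟩ : Fin (m+1)) = Fin.last m := rfl
    rw [heq]
    exact haU
  obtain ⟨Q, R, hQd, ⟨r, hr⟩, hNQR⟩ :=
    exist_div M m (fun i => if h : i < m+1 then aF ⟨i, h⟩ else 0) haUnit hMa n N b hb
  refine ⟨(Q, R), ⟨hQd, (ordLT_iff R m).2 ⟨r, hr⟩, hNQR⟩, ?_⟩
  rintro ⟨Q', R'⟩ ⟨hQ'd, hR', hN'⟩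
  have h : M * Q + R = M * Q' + R' := by rw [← hNQR, ← hN']
  have hsub : M * (Q' - Q) = R - R' := by
    rw [end_mul_sub]
    apply LinearMap.ext; intro f
    have hf := congrArg (fun (X : Module.End ℝ SuperA) => X f) h
    simp only [LinearMap.add_apply, Module.End.mul_apply, LinearMap.sub_apply] at hf ⊢
    rw [sub_eq_sub_iff_add_eq_add]
    exact hf.symm.trans (add_comm _ _)
  obtain ⟨np, p, hp⟩ := (isDiffOp_iff _).1 (isDiffOp_sub hQ'd hQd)
  obtain ⟨r', hr'⟩ := (ordLT_iff R' m).1 hR'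
  have hex : ∃ rr : ℕ → SuperA,
      (∑ i ∈ range (m+1), mulOp (if h : i < m+1 then aF ⟨i, h⟩ else 0) * D ^ i)
          * (∑ i ∈ range np, mulOp (p i) * D ^ i)
        = ∑ i ∈ range m, mulOp (rr i) * D ^ i := by
    refine ⟨fun i => r i - r' i, ?_⟩
    calc (∑ i ∈ range (m+1), mulOp (if h : i < m+1 then aF ⟨i, h⟩ else 0) * D ^ i)
        * (∑ i ∈ range np, mulOp (p i) * D ^ i)
        = M * (Q' - Q) := by rw [← hMa, ← hp]
      _ = R - R' := hsub
      _ = ∑ i ∈ range m, mulOp (r i) * D ^ i - ∑ i ∈ range m, mulOp (r' i) * D ^ i := by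
          rw [← hr, ← hr']
      _ = ∑ i ∈ range m, (mulOp (r i) * D ^ i - mulOp (r' i) * D ^ i) := end_sum_sub _ _ _
      _ = ∑ i ∈ range m, mulOp (r i - r' i) * D ^ i :=
          Finset.sum_congr rfl fun i _ => by
            rw [mulOp_sub]; exact (end_sub_mul _ _ _).symm
  have hallp := cancel m (fun i => if h : i < m+1 then aF ⟨i, h⟩ else 0) haUnit np p hex
  have hPzero : Q' - Q = 0 := by
    rw [hp]
    apply Finset.sum_eq_zero
    intro i hi
    rw [hallp i (mem_range.1 hi), mulOp_zero, zero_mul]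
  have hQQ : Q' = Q := sub_eq_zero.1 hPzero
  have hRR : R' = R := by
    rw [hQQ] at h
    apply LinearMap.ext; intro f
    have hf := congrArg (fun (X : Module.End ℝ SuperA) => X f) h
    simp only [LinearMap.add_apply] at hf
    exact (add_left_cancel hf).symm
  simp only [Prod.mk.injEq]
  exact ⟨hQQ, hRR⟩

end
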